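/- Let s > 0, μ > 1, and let Φ : ℝ → ℝ be a bounded continuous solution of the steady fKdV equation with speed μ that is not identically zero and satisfies lim_{x→±∞} Φ(x) = 0. Then there exists δ > 0 such that the function x ↦ e^{δ|x|} · Φ(x) belongs to L¹(ℝ) ∩ L^∞(ℝ); in particular, Φ decays exponentially as |x| → ∞. -/

import Mathlib

/-!
Far out, `Φ` is small, so the equation `K_s ∗ Φ = Φ (μ - Φ)` makes `|Φ|` a subsolution there:
`λ |Φ| ≤ K_s ∗ |Φ|` with `λ = (μ + 1) / 2 > 1`. Writing `K_s` as a superposition of Gaussians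
`e^{-t - x²/4t}` and using `e^{|x|/2 - t - x²/4t} ≤ e^{-t/2 - x²/8t}` shows that `e^{|x|/2} K_s`
is integrable, so by dominated convergence `∫ e^{δ|x|} K_s → ∫ K_s ≤ 1` as `δ → 0`, and some
`δ > 0` has `∫ e^{δ|x|} K_s < λ`. As the weight `e^{δ|x|}` is submultiplicative,
`T = sup e^{δ|x|} |Φ|` then satisfies `T ≤ max (e^{δR} sup |Φ|) ((∫ e^{δ|x|} K_s / λ) T)`,
which bounds `T`. Halving `δ` gives integrability.
-/

open Real MeasureTheory Set Filter

/-- The Bessel kernel `K_s`. -/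
noncomputable def besselKernel (s : ℝ) (x : ℝ) : ℝ :=
  (1 / (2 * Real.sqrt Real.pi * Real.Gamma (s / 2))) *
    ∫ t in Set.Ioi (0 : ℝ), Real.exp (-t - x ^ 2 / (4 * t)) * t ^ ((s - 3) / 2)

/-- Convolution with the Bessel kernel. -/
noncomputable def convBessel (s : ℝ) (f : ℝ → ℝ) (x : ℝ) : ℝ :=
  ∫ y : ℝ, besselKernel s (x - y) * f y

open scoped ENNReal Topology

lemma integrable_exp_neg_mul_abs {b : ℝ} (hb : 0 < b) :
    Integrable fun x : ℝ => exp (-(b * |x|)) := by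
  rw [← integrableOn_univ, ← Iic_union_Ioi (a := 0)]
  refine ((integrableOn_exp_mul_Iic hb 0).congr_fun (fun x hx => ?_) measurableSet_Iic).union
    ((exp_neg_integrableOn_Ioi 0 hb).congr_fun (fun x hx => ?_) measurableSet_Ioi)
  · simp only [abs_of_nonpos (show x ≤ 0 from hx), mul_neg, neg_neg]
  · simp only [abs_of_pos (show 0 < x from hx), neg_mul]

lemma exists_forall_abs_le_of_tendsto {f : ℝ → ℝ} (hbot : Tendsto f atBot (𝓝 0))
    (htop : Tendsto f atTop (𝓝 0)) {ε : ℝ} (hε : 0 < ε) : ∃ R, ∀ x, R ≤ |x| → |f x| ≤ ε := by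
  have h : Tendsto f (comap abs atTop) (𝓝 0) := comap_abs_atTop (G := ℝ) ▸ hbot.sup htop
  obtain ⟨R, hR⟩ := eventually_atTop.1 <| eventually_comap.1 <|
    h.eventually (Metric.closedBall_mem_nhds 0 hε)
  exact ⟨R, fun x hx => by simpa using hR |x| hx x rfl⟩

lemma tendsto_lintegral_ofReal_exp_mul_mul {α : Type*} [MeasurableSpace α] {μ : Measure α}
    {g : α → ℝ} {f : α → ℝ≥0∞} (hg : Measurable g) (hg0 : ∀ x, 0 ≤ g x) (hf : Measurable f)
    {b : ℝ} (hb : 0 < b) (hfin : ∫⁻ x, ENNReal.ofReal (exp (b * g x)) * f x ∂μ ≠ ∞) :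
    Tendsto (fun δ => ∫⁻ x, ENNReal.ofReal (exp (δ * g x)) * f x ∂μ) (𝓝 0)
      (𝓝 (∫⁻ x, f x ∂μ)) := by
  refine tendsto_lintegral_filter_of_dominated_convergence _
    (.of_forall fun δ => by fun_prop) ?_ hfin (ae_of_all _ fun x => ?_)
  · filter_upwards [eventually_le_nhds hb] with δ hδ
    exact ae_of_all _ fun x => by gcongr; exact hg0 x
  · have hexp : Tendsto (fun δ : ℝ => ENNReal.ofReal (exp (δ * g x))) (𝓝 0) (𝓝 1) := by
      have : Continuous fun δ : ℝ => ENNReal.ofReal (exp (δ * g x)) :=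
        ENNReal.continuous_ofReal.comp (by fun_prop)
      simpa using this.tendsto 0
    simpa using ENNReal.Tendsto.mul_const hexp (.inl one_ne_zero)

lemma min_exp_mul_abs_le {δ N : ℝ} (hδ : 0 ≤ δ) (hN : 0 ≤ N) (x y : ℝ) :
    min (exp (δ * |x|)) N ≤ exp (δ * |x - y|) * min (exp (δ * |y|)) N := by
  have hxy : exp (δ * |x|) ≤ exp (δ * |x - y|) * exp (δ * |y|) := by
    rw [← exp_add, ← mul_add]
    gcongr
    linarith [abs_sub_abs_le_abs_sub x y]
  rcases le_total (exp (δ * |y|)) N with h | h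
  · rw [min_eq_left h]
    exact (min_le_left _ _).trans hxy
  · rw [min_eq_right h]
    exact (min_le_right _ _).trans (le_mul_of_one_le_left hN (one_le_exp (by positivity)))

lemma le_of_le_max_mul_ciSup {ι : Type*} [Nonempty ι] {f : ι → ℝ} {C q : ℝ}
    (hf : BddAbove (range f)) (hC : 0 ≤ C) (hq : q < 1) (h : ∀ i, f i ≤ max C (q * ⨆ j, f j))
    (i : ι) : f i ≤ C := by
  refine (le_ciSup hf i).trans ?_
  rcases le_max_iff.1 (ciSup_le h) with hT | hT
  · exact hT
  · nlinarith

lemma min_exp_mul_integral_le {K u : ℝ → ℝ} {δ N T : ℝ} (hK0 : ∀ x, 0 ≤ K x) (hδ : 0 ≤ δ)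
    (hN : 0 ≤ N) (hF : Integrable fun x => exp (δ * |x|) * K x) (hu0 : ∀ x, 0 ≤ u x)
    (hT : ∀ y, min (exp (δ * |y|)) N * u y ≤ T) (x : ℝ) :
    min (exp (δ * |x|)) N * ∫ y, K (x - y) * u y ≤ (∫ y, exp (δ * |y|) * K y) * T := by
  have hmin : ∀ y, 0 ≤ min (exp (δ * |y|)) N := fun y => le_min (exp_pos _).le hN
  calc min (exp (δ * |x|)) N * ∫ y, K (x - y) * u y
      = ∫ y, min (exp (δ * |x|)) N * (K (x - y) * u y) := (integral_const_mul _ _).symm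
    _ ≤ ∫ y, exp (δ * |x - y|) * K (x - y) * T := by
        refine integral_mono_of_nonneg (ae_of_all _ fun y => ?_) ((hF.comp_sub_left x).mul_const T)
          (ae_of_all _ fun y => ?_)
        · exact mul_nonneg (hmin x) (mul_nonneg (hK0 _) (hu0 y))
        · calc min (exp (δ * |x|)) N * (K (x - y) * u y)
              ≤ exp (δ * |x - y|) * min (exp (δ * |y|)) N * (K (x - y) * u y) := by
                gcongr
                · exact mul_nonneg (hK0 _) (hu0 y)
                · exact min_exp_mul_abs_le hδ hN x y
            _ = exp (δ * |x - y|) * K (x - y) * (min (exp (δ * |y|)) N * u y) := by ring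
            _ ≤ exp (δ * |x - y|) * K (x - y) * T := by
                gcongr
                · exact mul_nonneg (exp_pos _).le (hK0 _)
                · exact hT y
    _ = (∫ y, exp (δ * |y|) * K y) * T := by
        rw [integral_mul_const, integral_sub_left_eq_self (fun y => exp (δ * |y|) * K y)]

theorem exp_mul_abs_mul_le_of_le_integral {K u : ℝ → ℝ} {δ l R M : ℝ} (hK0 : ∀ x, 0 ≤ K x)
    (hδ : 0 ≤ δ) (hF : Integrable fun x => exp (δ * |x|) * K x)
    (hmass : ∫ x, exp (δ * |x|) * K x < l) (hu0 : ∀ x, 0 ≤ u x) (huM : ∀ x, u x ≤ M)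
    (hsub : ∀ x, R ≤ |x| → l * u x ≤ ∫ y, K (x - y) * u y) (x : ℝ) :
    exp (δ * |x|) * u x ≤ exp (δ * R) * M := by
  have hl : 0 < l := (integral_nonneg fun x => mul_nonneg (exp_pos _).le (hK0 x)).trans_lt hmass
  have hM : 0 ≤ M := (hu0 0).trans (huM 0)
  -- the truncated weights `min (exp (δ * |x|)) N` make every supremum below finite
  have htrunc : ∀ N, 1 ≤ N → ∀ x, min (exp (δ * |x|)) N * u x ≤ exp (δ * R) * M := by
    intro N hN
    have hbdd : BddAbove (range fun x => min (exp (δ * |x|)) N * u x) :=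
      ⟨N * M, forall_mem_range.2 fun x =>
        mul_le_mul (min_le_right _ _) (huM x) (hu0 x) (by positivity)⟩
    refine le_of_le_max_mul_ciSup hbdd (by positivity) ((div_lt_one hl).2 hmass) fun x => ?_
    rcases le_or_gt |x| R with hx | hx
    · refine le_max_of_le_left (mul_le_mul ((min_le_left _ _).trans ?_) (huM x) (hu0 x)
        (exp_pos _).le)
      gcongr
    · refine le_max_of_le_right ?_
      rw [div_mul_eq_mul_div, le_div_iff₀ hl]
      calc min (exp (δ * |x|)) N * u x * l = min (exp (δ * |x|)) N * (l * u x) := by ring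
        _ ≤ min (exp (δ * |x|)) N * ∫ y, K (x - y) * u y :=
            mul_le_mul_of_nonneg_left (hsub x hx.le) (le_min (exp_pos _).le (by linarith))
        _ ≤ _ := min_exp_mul_integral_le hK0 hδ (by linarith) hF hu0 (le_ciSup hbdd) x
  simpa using htrunc (max (exp (δ * |x|)) 1) (le_max_right _ _) x

lemma integrable_exp_half_mul_abs_mul {φ : ℝ → ℝ} {δ C : ℝ} (hδ : 0 < δ)
    (hφ : AEStronglyMeasurable φ) (hC : ∀ x, exp (δ * |x|) * |φ x| ≤ C) :
    Integrable fun x => exp (δ / 2 * |x|) * φ x := by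
  refine ((integrable_exp_neg_mul_abs (half_pos hδ)).const_mul C).mono' (by fun_prop)
    (ae_of_all _ fun x => ?_)
  rw [norm_mul, norm_of_nonneg (exp_pos _).le, Real.norm_eq_abs]
  calc exp (δ / 2 * |x|) * |φ x| = exp (-(δ / 2 * |x|)) * (exp (δ * |x|) * |φ x|) := by
        rw [← mul_assoc, ← exp_add]; ring_nf
    _ ≤ C * exp (-(δ / 2 * |x|)) := by rw [mul_comm C]; gcongr; exact hC x

noncomputable def besselIntegrand (s b c x t : ℝ) : ℝ :=
  exp (-(b * t) - x ^ 2 / (c * t)) * t ^ ((s - 3) / 2)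

lemma measurable_besselIntegrand (s b c : ℝ) :
    Measurable fun p : ℝ × ℝ => besselIntegrand s b c p.1 p.2 := by
  unfold besselIntegrand; fun_prop

lemma besselKernel_eq (s x : ℝ) :
    besselKernel s x = (2 * √π * Gamma (s / 2))⁻¹ * ∫ t in Ioi 0, besselIntegrand s 1 4 x t := by
  simp [besselKernel, besselIntegrand]

lemma besselKernel_nonneg {s : ℝ} (hs : 0 < s) (x : ℝ) : 0 ≤ besselKernel s x := by
  have := Gamma_pos_of_pos (half_pos hs)
  rw [besselKernel_eq]
  exact mul_nonneg (by positivity) <| setIntegral_nonneg measurableSet_Ioi fun t ht => by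
    unfold besselIntegrand; have : 0 < t := ht; positivity

lemma measurable_besselKernel (s : ℝ) : Measurable (besselKernel s) := by
  simp_rw [funext (besselKernel_eq s)]
  exact (measurable_besselIntegrand s 1 4).stronglyMeasurable.integral_prod_right'.measurable
    |>.const_mul _

lemma ofReal_besselKernel_le {s : ℝ} (hs : 0 < s) (x : ℝ) :
    ENNReal.ofReal (besselKernel s x) ≤ ENNReal.ofReal (2 * √π * Gamma (s / 2))⁻¹ *
      ∫⁻ t in Ioi 0, ENNReal.ofReal (besselIntegrand s 1 4 x t) := by
  have := Gamma_pos_of_pos (half_pos hs)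
  rw [besselKernel_eq, ENNReal.ofReal_mul (by positivity)]
  gcongr
  rw [integral_eq_lintegral_of_nonneg_ae _ (by unfold besselIntegrand; fun_prop)]
  · exact ENNReal.ofReal_toReal_le
  · filter_upwards [ae_restrict_mem measurableSet_Ioi] with t (ht : 0 < t)
    unfold besselIntegrand; positivity

lemma lintegral_ofReal_besselIntegrand (s b : ℝ) {c t : ℝ} (hc : 0 < c) (ht : 0 < t) :
    ∫⁻ x, ENNReal.ofReal (besselIntegrand s b c x t) =
      ENNReal.ofReal (√(π * c) * (t ^ (s / 2 - 1) * exp (-(b * t)))) := by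
  have heq : ∀ x, besselIntegrand s b c x t =
      exp (-(b * t)) * t ^ ((s - 3) / 2) * exp (-(c * t)⁻¹ * x ^ 2) := fun x => by
    rw [besselIntegrand, sub_eq_add_neg, exp_add]; ring_nf
  simp_rw [heq]
  rw [← ofReal_integral_eq_lintegral_ofReal
      ((integrable_exp_neg_mul_sq (by positivity)).const_mul _)
      (ae_of_all _ fun x => by positivity),
    integral_const_mul, integral_gaussian, div_inv_eq_mul, ← mul_assoc, sqrt_mul (by positivity),
    sqrt_eq_rpow t]
  congr 1
  rw [show s / 2 - 1 = (s - 3) / 2 + 1 / 2 by ring, rpow_add ht]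
  ring

lemma lintegral_lintegral_ofReal_besselIntegrand {s b c : ℝ} (hs : 0 < s) (hb : 0 < b)
    (hc : 0 < c) :
    ∫⁻ x, ∫⁻ t in Ioi 0, ENNReal.ofReal (besselIntegrand s b c x t) =
      ENNReal.ofReal (√(π * c) * ((1 / b) ^ (s / 2) * Gamma (s / 2))) := by
  have hΓ : ∫ t in Ioi 0, t ^ (s / 2 - 1) * exp (-(b * t)) = (1 / b) ^ (s / 2) * Gamma (s / 2) :=
    integral_rpow_mul_exp_neg_mul_Ioi (half_pos hs) hb
  have hint : IntegrableOn (fun t => t ^ (s / 2 - 1) * exp (-(b * t))) (Ioi 0) :=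
    .of_integral_ne_zero (by rw [hΓ]; have := Gamma_pos_of_pos (half_pos hs); positivity)
  rw [lintegral_lintegral_swap (measurable_besselIntegrand s b c).ennreal_ofReal.aemeasurable,
    setLIntegral_congr_fun measurableSet_Ioi fun t ht => lintegral_ofReal_besselIntegrand s b hc ht,
    ← ofReal_integral_eq_lintegral_ofReal (hint.const_mul _), integral_const_mul, hΓ]
  filter_upwards [ae_restrict_mem measurableSet_Ioi] with t (ht : 0 < t)
  positivity

lemma lintegral_ofReal_besselKernel_le_one {s : ℝ} (hs : 0 < s) :
    ∫⁻ x, ENNReal.ofReal (besselKernel s x) ≤ 1 := by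
  have := Gamma_pos_of_pos (half_pos hs)
  calc ∫⁻ x, ENNReal.ofReal (besselKernel s x)
      ≤ ∫⁻ x, ENNReal.ofReal (2 * √π * Gamma (s / 2))⁻¹ *
          ∫⁻ t in Ioi 0, ENNReal.ofReal (besselIntegrand s 1 4 x t) :=
        lintegral_mono (ofReal_besselKernel_le hs)
    _ = 1 := by
      rw [lintegral_const_mul _
          (measurable_besselIntegrand s 1 4).ennreal_ofReal.lintegral_prod_right',
        lintegral_lintegral_ofReal_besselIntegrand hs one_pos four_pos,
        ← ENNReal.ofReal_mul (by positivity), show π * 4 = 2 ^ 2 * π by ring,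
        sqrt_mul (by positivity), sqrt_sq zero_le_two, div_one, one_rpow, one_mul,
        inv_mul_cancel₀ (by positivity), ENNReal.ofReal_one]

lemma exp_mul_abs_mul_besselIntegrand_le {s δ x t : ℝ} (hδ : δ ≤ 1 / 2) (ht : 0 < t) :
    exp (δ * |x|) * besselIntegrand s 1 4 x t ≤ besselIntegrand s (1 / 2) 8 x t := by
  unfold besselIntegrand
  rw [← mul_assoc, ← exp_add]
  gcongr
  -- `|x| / 2 ≤ t / 2 + x² / (8t)` is AM-GM
  have hamgm : |x| / 2 ≤ t / 2 + x ^ 2 / (8 * t) := by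
    rw [← sq_abs x, div_add_div _ _ two_ne_zero (by positivity), le_div_iff₀ (by positivity)]
    nlinarith [sq_nonneg (2 * t - |x|)]
  have hx : x ^ 2 / (4 * t) = 2 * (x ^ 2 / (8 * t)) := by field_simp; ring
  nlinarith [abs_nonneg x]

lemma lintegral_ofReal_exp_half_mul_abs_mul_besselKernel_ne_top {s : ℝ} (hs : 0 < s) :
    ∫⁻ x, ENNReal.ofReal (exp (1 / 2 * |x|)) * ENNReal.ofReal (besselKernel s x) ≠ ∞ := by
  refine ne_top_of_le_ne_top (b := ENNReal.ofReal (2 * √π * Gamma (s / 2))⁻¹ *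
    ∫⁻ x, ∫⁻ t in Ioi 0, ENNReal.ofReal (besselIntegrand s (1 / 2) 8 x t)) ?_ ?_
  · rw [lintegral_lintegral_ofReal_besselIntegrand hs one_half_pos (by norm_num)]
    exact ENNReal.mul_ne_top ENNReal.ofReal_ne_top ENNReal.ofReal_ne_top
  rw [← lintegral_const_mul _
    (measurable_besselIntegrand s _ _).ennreal_ofReal.lintegral_prod_right']
  refine lintegral_mono fun x => ?_
  calc ENNReal.ofReal (exp (1 / 2 * |x|)) * ENNReal.ofReal (besselKernel s x)
      ≤ ENNReal.ofReal (exp (1 / 2 * |x|)) * (ENNReal.ofReal (2 * √π * Gamma (s / 2))⁻¹ *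
          ∫⁻ t in Ioi 0, ENNReal.ofReal (besselIntegrand s 1 4 x t)) := by
        gcongr; exact ofReal_besselKernel_le hs x
    _ = ENNReal.ofReal (2 * √π * Gamma (s / 2))⁻¹ *
          ∫⁻ t in Ioi 0, ENNReal.ofReal (exp (1 / 2 * |x|) * besselIntegrand s 1 4 x t) := by
        rw [mul_left_comm, ← lintegral_const_mul' _ _ ENNReal.ofReal_ne_top]
        simp_rw [ENNReal.ofReal_mul (exp_pos _).le]
    _ ≤ _ := by
        gcongr ENNReal.ofReal _ * ?_
        refine setLIntegral_mono' measurableSet_Ioi fun t ht => ?_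
        exact ENNReal.ofReal_le_ofReal (exp_mul_abs_mul_besselIntegrand_le le_rfl ht)

lemma exists_integral_exp_mul_abs_mul_besselKernel_lt {s l : ℝ} (hs : 0 < s) (hl : 1 < l) :
    ∃ δ > 0, Integrable (fun x => exp (δ * |x|) * besselKernel s x) ∧
      ∫ x, exp (δ * |x|) * besselKernel s x < l := by
  have hlim := tendsto_lintegral_ofReal_exp_mul_mul (μ := volume) measurable_abs abs_nonneg
    (measurable_besselKernel s).ennreal_ofReal one_half_pos
    (lintegral_ofReal_exp_half_mul_abs_mul_besselKernel_ne_top hs)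
  have hlt : ∫⁻ x, ENNReal.ofReal (besselKernel s x) < ENNReal.ofReal l :=
    (lintegral_ofReal_besselKernel_le_one hs).trans_lt (by simpa using hl)
  obtain ⟨δ, hδl, hδ⟩ := ((hlim.eventually (gt_mem_nhds hlt)).filter_mono nhdsWithin_le_nhds
    |>.and (self_mem_nhdsWithin (s := Ioi 0))).exists
  simp_rw [← ENNReal.ofReal_mul (exp_pos _).le] at hδl
  have hnn : 0 ≤ᵐ[volume] fun x => exp (δ * |x|) * besselKernel s x :=
    ae_of_all _ fun x => mul_nonneg (exp_pos _).le (besselKernel_nonneg hs x)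
  have hmeas : AEStronglyMeasurable (fun x => exp (δ * |x|) * besselKernel s x) := by
    have := measurable_besselKernel s; fun_prop
  refine ⟨δ, hδ,
    ⟨hmeas, (hasFiniteIntegral_iff_ofReal hnn).2 (hδl.trans ENNReal.ofReal_lt_top)⟩, ?_⟩
  rw [integral_eq_lintegral_of_nonneg_ae hnn hmeas]
  exact ENNReal.toReal_lt_of_lt_ofReal hδl

lemma abs_convBessel_le {s : ℝ} (hs : 0 < s) (f : ℝ → ℝ) (x : ℝ) :
    |convBessel s f x| ≤ ∫ y, besselKernel s (x - y) * |f y| := by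
  simpa only [convBessel, Real.norm_eq_abs, abs_mul, abs_of_nonneg (besselKernel_nonneg hs _)] using
    norm_integral_le_integral_norm fun y => besselKernel s (x - y) * f y

theorem solitary_wave_exponential_decay_general (s : ℝ) (hs : 0 < s) (μ : ℝ) (hμ : 1 < μ)
    (Φ : ℝ → ℝ) (hcont : Continuous Φ) (hbdd : ∃ M : ℝ, ∀ x : ℝ, |Φ x| ≤ M)
    (hsol : ∀ x : ℝ, -μ * Φ x + Φ x ^ 2 + convBessel s Φ x = 0)
    (hlimtop : Tendsto Φ atTop (nhds 0)) (hlimbot : Tendsto Φ atBot (nhds 0)) :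
    ∃ δ : ℝ, 0 < δ ∧
      Integrable (fun x : ℝ => Real.exp (δ * |x|) * Φ x) ∧
      ∃ M : ℝ, ∀ x : ℝ, |Real.exp (δ * |x|) * Φ x| ≤ M := by
  obtain ⟨M, hM⟩ := hbdd
  obtain ⟨R, hR⟩ := exists_forall_abs_le_of_tendsto hlimbot hlimtop (ε := (μ - 1) / 2)
    (by linarith)
  obtain ⟨δ, hδ, hF, hmass⟩ :=
    exists_integral_exp_mul_abs_mul_besselKernel_lt (l := (μ + 1) / 2) hs (by linarith)
  have hsub : ∀ x, R ≤ |x| → (μ + 1) / 2 * |Φ x| ≤ ∫ y, besselKernel s (x - y) * |Φ y| := by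
    intro x hx
    have hΦx := le_of_abs_le (hR x hx)
    calc (μ + 1) / 2 * |Φ x| ≤ |μ - Φ x| * |Φ x| := by
          gcongr; rw [abs_of_pos (by linarith)]; linarith
      _ = |convBessel s Φ x| := by
          rw [← abs_mul, show convBessel s Φ x = (μ - Φ x) * Φ x by linear_combination hsol x]
      _ ≤ _ := abs_convBessel_le hs Φ x
  have hdecay := exp_mul_abs_mul_le_of_le_integral (besselKernel_nonneg hs) hδ.le hF hmass
    (fun x => abs_nonneg (Φ x)) hM hsub
  refine ⟨δ / 2, half_pos hδ, integrable_exp_half_mul_abs_mul hδ hcont.aestronglyMeasurable hdecay,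
    exp (δ * R) * M, fun x => ?_⟩
  rw [abs_mul, abs_of_pos (exp_pos _)]
  refine le_trans ?_ (hdecay x)
  gcongr
  linarith [abs_nonneg x]

/-- exponential decay of nontrivial bounded solitary solutions with
supercritical speed `μ > 1`: `e^{δ|·|} Φ ∈ L¹ ∩ L^∞` for some `δ > 0`. -/
theorem solitary_wave_exponential_decay (s : ℝ) (hs : 0 < s) (μ : ℝ) (hμ : 1 < μ)
    (Φ : ℝ → ℝ) (hcont : Continuous Φ) (hbdd : ∃ M : ℝ, ∀ x : ℝ, |Φ x| ≤ M)
    (hsol : ∀ x : ℝ, -μ * Φ x + Φ x ^ 2 + convBessel s Φ x = 0)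
    (hnontriv : ∃ x : ℝ, Φ x ≠ 0)
    (hlimtop : Tendsto Φ atTop (nhds 0)) (hlimbot : Tendsto Φ atBot (nhds 0)) :
    ∃ δ : ℝ, 0 < δ ∧
      Integrable (fun x : ℝ => Real.exp (δ * |x|) * Φ x) ∧
      ∃ M : ℝ, ∀ x : ℝ, |Real.exp (δ * |x|) * Φ x| ≤ M :=
  solitary_wave_exponential_decay_general s hs μ hμ Φ hcont hbdd hsol hlimtop hlimbot
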